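/- Split dead-end elimination criterion: fix a residue i ∈ V, a rotamer l ∈ D(i), and a splitting residue s ∈ V with s ≠ i. Suppose that for every rotamer m ∈ D(s) there exists a rotamer k ∈ D(i) such that S_i(l) − S_i(k) + (P_{is}(l,m) − P_{is}(k,m)) + Σ_{j∈V, j∉{i,s}} min_{t∈D(j)} [P_{ij}(l,t) − P_{ij}(k,t)] > 0. Then no energy-minimizing assignment R satisfies R(i) = l. -/

import Mathlib

/-!
Suppose `R` is a minimizer with `R i = l`, and let `k` be the rotamer that the criterion gives
for `m = R s`. Moving residue `i` from `l` to `k` changes only the terms involving `i`; by the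
symmetry of `P` each pair `{i, j}` contributes `P i j` whichever way it is ordered, so the energy
drops by `S i l - S i k + ∑_{j ≠ i} (P i j l (R j) - P i j k (R j))`. The term `j = s` is the one
in the criterion, and every other term is at least its minimum over `t`, so the drop is positive,
contradicting minimality.
-/

open scoped BigOperators

variable {V : Type*} [Fintype V] [LinearOrder V]
  {D : V → Type*} [∀ i, Fintype (D i)] [∀ i, Nonempty (D i)]

/-- Energy of the monomer side-chain packing problem:
`G(R) = Σ_{i∈V} S_i(R(i)) + Σ_{{i,j}, i≠j} P_{ij}(R(i),R(j))`, the second sum ranging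
over unordered pairs of distinct residues (each such pair `{i,j}` represented once,
with `i < j` in a fixed linear order on `V`). -/
def energyM (S : ∀ i, D i → ℝ) (P : ∀ i j, D i → D j → ℝ) (R : ∀ i, D i) : ℝ :=
  (∑ i, S i (R i))
    + ∑ p ∈ Finset.univ.filter (fun p : V × V => p.1 < p.2), P p.1 p.2 (R p.1) (R p.2)

open Finset in
theorem Finset.sum_sum_eq_sum_erase_of_eq_zero {ι M : Type*} [Fintype ι] [DecidableEq ι]
    [AddCommMonoid M] {f : ι → ι → M} (i : ι) (hii : f i i = 0)
    (hf : ∀ x y, x ≠ i → y ≠ i → f x y = 0) :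
    ∑ x, ∑ y, f x y = ∑ j ∈ univ.erase i, (f i j + f j i) := by
  have row : ∑ y, f i y = ∑ j ∈ univ.erase i, f i j := by
    rw [← add_sum_erase _ _ (mem_univ i), hii, zero_add]
  have col : ∀ x ∈ univ.erase i, ∑ y, f x y = f x i := fun x hx =>
    sum_eq_single i (fun y _ hy => hf x y (ne_of_mem_erase hx) hy) (by simp)
  rw [← add_sum_erase _ _ (mem_univ i), row, sum_congr rfl col, sum_add_distrib]

section Energy

variable {V : Type*} [LinearOrder V] {D : V → Type*}
  {S : ∀ i, D i → ℝ} {P : ∀ i j, D i → D j → ℝ}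

def pairTerm (P : ∀ i j, D i → D j → ℝ) (R : ∀ i, D i) (x y : V) : ℝ :=
  if x < y then P x y (R x) (R y) else 0

theorem energyM_eq_sum_pairTerm [Fintype V] (R : ∀ i, D i) :
    energyM S P R = ∑ i, S i (R i) + ∑ x, ∑ y, pairTerm P R x y := by
  rw [energyM, Finset.sum_filter, Fintype.sum_prod_type]
  rfl

theorem pairTerm_add_pairTerm_swap (hsymm : ∀ i j l m, P i j l m = P j i m l)
    (R : ∀ i, D i) {x y : V} (hxy : x ≠ y) :
    pairTerm P R x y + pairTerm P R y x = P x y (R x) (R y) := by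
  rcases hxy.lt_or_gt with h | h
  · simp [pairTerm, h, h.not_gt]
  · simp [pairTerm, h, h.not_gt, hsymm y x]

theorem energyM_sub_energyM_update [Fintype V] (hsymm : ∀ i j l m, P i j l m = P j i m l)
    (R : ∀ i, D i) (i : V) (k : D i) :
    energyM S P R - energyM S P (Function.update R i k) =
      S i (R i) - S i k + ∑ j ∈ Finset.univ.erase i, (P i j (R i) (R j) - P i j k (R j)) := by
  set R' := Function.update R i k
  have hR' : ∀ j ≠ i, R' j = R j := fun j hj => Function.update_of_ne hj k R
  have single : ∑ v, S v (R v) - ∑ v, S v (R' v) = S i (R i) - S i k := by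
    rw [← Finset.sum_sub_distrib, Finset.sum_eq_single i (fun j _ hj => by simp [hR' j hj])
      (by simp)]
    simp [R']
  have pairs : ∑ x, ∑ y, pairTerm P R x y - ∑ x, ∑ y, pairTerm P R' x y =
      ∑ j ∈ Finset.univ.erase i, (P i j (R i) (R j) - P i j k (R j)) := by
    simp only [← Finset.sum_sub_distrib]
    rw [Finset.sum_sum_eq_sum_erase_of_eq_zero i (by simp [pairTerm])
      (fun x y hx hy => by simp [pairTerm, hR' x hx, hR' y hy])]
    refine Finset.sum_congr rfl fun j hj => ?_
    have hij : i ≠ j := (Finset.ne_of_mem_erase hj).symm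
    have h := pairTerm_add_pairTerm_swap hsymm R hij
    have h' := pairTerm_add_pairTerm_swap hsymm R' hij
    simp only [R', Function.update_self, Function.update_of_ne hij.symm] at h'
    linear_combination h - h'
  rw [energyM_eq_sum_pairTerm, energyM_eq_sum_pairTerm]
  linear_combination single + pairs

theorem splitBound_le_energyM_sub_energyM_update [Fintype V] [∀ i, Fintype (D i)]
    (hsymm : ∀ i j l m, P i j l m = P j i m l) (R : ∀ i, D i) {i s : V} (hs : s ≠ i) (k : D i) :
    S i (R i) - S i k + (P i s (R i) (R s) - P i s k (R s))
        + ∑ j ∈ (Finset.univ.erase i).erase s, ⨅ t : D j, (P i j (R i) t - P i j k t)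
      ≤ energyM S P R - energyM S P (Function.update R i k) := by
  rw [energyM_sub_energyM_update hsymm,
    ← Finset.add_sum_erase _ _ (Finset.mem_erase.mpr ⟨hs, Finset.mem_univ s⟩), ← add_assoc]
  gcongr with j
  exact ciInf_le (Finite.bddBelow_range _) (R j)

end Energy

/-- split dead-end elimination criterion.  Fix a residue `i ∈ V`, a
rotamer `l ∈ D(i)` and a splitting residue `s ≠ i`.  If for every `m ∈ D(s)` there is a
rotamer `k ∈ D(i)` with
`S_i(l) − S_i(k) + (P_{is}(l,m) − P_{is}(k,m))
  + Σ_{j∉{i,s}} min_{t∈D(j)} [P_{ij}(l,t) − P_{ij}(k,t)] > 0`,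
then no energy-minimizing assignment `R` satisfies `R(i) = l`. -/
theorem split_dee
    (S : ∀ i, D i → ℝ) (P : ∀ i j, D i → D j → ℝ)
    (hsymm : ∀ i j l m, P i j l m = P j i m l)
    (i : V) (l : D i) (s : V) (hs : s ≠ i)
    (hcrit : ∀ m : D s, ∃ k : D i,
      0 < S i l - S i k + (P i s l m - P i s k m)
        + ∑ j ∈ (Finset.univ.erase i).erase s, ⨅ t : D j, (P i j l t - P i j k t)) :
    ∀ R : ∀ v, D v, energyM S P R = (⨅ R' : ∀ v, D v, energyM S P R') → R i ≠ l := by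
  rintro R hmin rfl
  obtain ⟨k, hk⟩ := hcrit (R s)
  have hdrop := splitBound_le_energyM_sub_energyM_update (S := S) hsymm R hs k
  have hle : energyM S P R ≤ energyM S P (Function.update R i k) :=
    hmin ▸ ciInf_le (Finite.bddBelow_range _) _
  linarith
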